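/- Let H be a closed densely defined operator such that for every ε > 0 the set σ_ε(H) is unbounded in ℂ but the spectrum σ(H) is contained in ℝ and discrete. Then H is not similar, via a bounded and boundedly invertible operator, to any self-adjoint operator. -/

import Mathlib

/-!
If `h = Ω H Ω⁻¹` is self-adjoint, then for `z ∉ σ(H)` the resolvent `(h - z)⁻¹` is a normal
operator: its adjoint is `(h - z̄)⁻¹`, which exists because `σ(H)` is real, and the two commute by
the resolvent identity. Its spectrum is that of `(H - z)⁻¹`, which lies in the disc of radius
`1 / dist(z, σ(H))`, because a nonzero `μ` in it forces `z + μ⁻¹ ∈ σ(H)`. Norm and spectral radius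
of a normal operator agree, so `‖(H - z)⁻¹‖ ≤ ‖Ω⁻¹‖ ‖Ω‖ / dist(z, σ(H))`: no point of `σ_ε(H)`
lies farther than `ε ‖Ω⁻¹‖ ‖Ω‖` from `σ(H)`.
-/

variable {E : Type*} [NormedAddCommGroup E] [InnerProductSpace ℂ E] [CompleteSpace E]

/-- `R` is the (bounded, everywhere defined) resolvent of the operator `H` at `z`,
i.e. `R = (H - z)⁻¹`. -/
def IsResolventAt (H : E →ₗ.[ℂ] E) (z : ℂ) (R : E →L[ℂ] E) : Prop :=
  (∀ x : E, ∃ hx : R x ∈ H.domain, H ⟨R x, hx⟩ - z • R x = x) ∧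
    ∀ y : H.domain, R (H y - z • (y : E)) = y

/-- The spectrum of an unbounded operator `H`. -/
def specSet (H : E →ₗ.[ℂ] E) : Set ℂ := {z | ∀ R : E →L[ℂ] E, ¬ IsResolventAt H z R}

/-- The ε-pseudospectrum `σ_ε(H) = σ(H) ∪ {λ : ‖(H-λ)⁻¹‖ > 1/ε}`. -/
def pseudospectrum (ε : ℝ) (H : E →ₗ.[ℂ] E) : Set ℂ :=
  {z | z ∈ specSet H ∨ ∃ R : E →L[ℂ] E, IsResolventAt H z R ∧ ε⁻¹ < ‖R‖}


/-- The conjugated operator `Ω H Ω⁻¹` with domain `Ω (Dom H)`. -/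
noncomputable def conjPMap (Ω : E ≃L[ℂ] E) (H : E →ₗ.[ℂ] E) : E →ₗ.[ℂ] E where
  domain := H.domain.comap Ω.symm.toLinearEquiv.toLinearMap
  toFun := (Ω.toLinearEquiv.toLinearMap.comp H.toFun).comp
    (Ω.symm.toLinearEquiv.toLinearMap.restrict fun _ hx => hx)

omit [CompleteSpace E] in
lemma notMem_specSet_iff {H : E →ₗ.[ℂ] E} {z : ℂ} :
    z ∉ specSet H ↔ ∃ R : E →L[ℂ] E, IsResolventAt H z R := by
  simp [specSet]

omit [CompleteSpace E] in
lemma conjPMap_apply (Ω : E ≃L[ℂ] E) (H : E →ₗ.[ℂ] E) (x : (conjPMap Ω H).domain) :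
    conjPMap Ω H x = Ω (H ⟨Ω.symm (x : E), x.2⟩) := rfl

omit [CompleteSpace E] in
lemma apply_mem_conjPMap_domain (Ω : E ≃L[ℂ] E) {H : E →ₗ.[ℂ] E} (x : H.domain) :
    Ω x ∈ (conjPMap Ω H).domain := by
  change Ω.symm (Ω x) ∈ H.domain
  rw [Ω.symm_apply_apply]
  exact x.2

omit [CompleteSpace E] in
lemma conjPMap_apply_map (Ω : E ≃L[ℂ] E) (H : E →ₗ.[ℂ] E) (x : H.domain) :
    conjPMap Ω H ⟨Ω x, apply_mem_conjPMap_domain Ω x⟩ = Ω (H x) := by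
  rw [conjPMap_apply]
  congr
  simp

lemma IsSelfAdjoint.isFormalAdjoint_self {𝕜 F : Type*} [RCLike 𝕜] [NormedAddCommGroup F]
    [InnerProductSpace 𝕜 F] [CompleteSpace F] {T : F →ₗ.[𝕜] F} (hT : IsSelfAdjoint T) :
    T.IsFormalAdjoint T := by
  have h := LinearPMap.adjoint_isFormalAdjoint hT.dense_domain
  rwa [LinearPMap.isSelfAdjoint_def.mp hT] at h

lemma IsStarNormal.norm_le_of_forall_mem_spectrum {A : Type*} [CStarAlgebra A] {a : A}
    [IsStarNormal a] {r : ℝ} (hr : 0 ≤ r) (h : ∀ μ ∈ spectrum ℂ a, ‖μ‖ ≤ r) : ‖a‖ ≤ r := by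
  have hrad : spectralRadius ℂ a ≤ ENNReal.ofReal r :=
    iSup₂_le fun μ hμ => by
      rw [← enorm_eq_nnnorm, ← ofReal_norm]
      exact ENNReal.ofReal_le_ofReal (h μ hμ)
  rw [IsStarNormal.spectralRadius_eq_nnnorm, ← enorm_eq_nnnorm, ← ofReal_norm] at hrad
  exact (ENNReal.ofReal_le_ofReal_iff hr).mp hrad

namespace IsResolventAt

variable {H : E →ₗ.[ℂ] E} {z w : ℂ} {R S : E →L[ℂ] E}

section

omit [CompleteSpace E]

lemma unique (hR : IsResolventAt H z R) (hS : IsResolventAt H z S) : R = S := by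
  ext x
  obtain ⟨hx, hHx⟩ := hS.1 x
  simpa [hHx] using hR.2 ⟨S x, hx⟩

lemma conj (Ω : E ≃L[ℂ] E) (hR : IsResolventAt H z R) :
    IsResolventAt (conjPMap Ω H) z ((Ω : E →L[ℂ] E) ∘L R ∘L (Ω.symm : E →L[ℂ] E)) := by
  constructor
  · intro x
    obtain ⟨hx, hHx⟩ := hR.1 (Ω.symm x)
    have h := congrArg Ω hHx
    rw [map_sub, map_smul, ← conjPMap_apply_map, ContinuousLinearEquiv.apply_symm_apply] at h
    exact ⟨_, h⟩
  · intro y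
    have hy : Ω.symm (y : E) ∈ H.domain := y.2
    simp only [ContinuousLinearMap.comp_apply, ContinuousLinearEquiv.coe_coe]
    rw [conjPMap_apply, map_sub Ω.symm, map_smul Ω.symm, Ω.symm_apply_apply, hR.2 ⟨_, hy⟩,
      Ω.apply_symm_apply]

lemma sub_eq_smul_mul (hR : IsResolventAt H z R) (hS : IsResolventAt H w S) :
    S - R = (w - z) • (R * S) := by
  ext x
  obtain ⟨hx, hHx⟩ := hS.1 x
  have h := hR.2 ⟨S x, hx⟩
  simp only at h
  rw [eq_add_of_sub_eq hHx, add_sub_assoc, ← sub_smul, map_add, map_smul] at h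
  exact sub_eq_of_eq_add' h.symm

lemma commute (hR : IsResolventAt H z R) (hS : IsResolventAt H w S) : Commute R S := by
  rcases eq_or_ne z w with rfl | hzw
  · rw [hR.unique hS]
  · have h := congrArg₂ (· + ·) (hR.sub_eq_smul_mul hS) (hS.sub_eq_smul_mul hR)
    simp only [sub_add_sub_cancel, sub_self] at h
    refine smul_right_injective _ (sub_ne_zero.mpr hzw.symm) ?_
    linear_combination (norm := module) -h

lemma isUnit_algebraMap_sub {μ : ℂ} (hR : IsResolventAt H z R)
    (hS : IsResolventAt H (z + μ⁻¹) S) (hμ : μ ≠ 0) :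
    IsUnit (algebraMap ℂ (E →L[ℂ] E) μ - R) := by
  have hRS : R * S = μ • (S - R) := by
    rw [hR.sub_eq_smul_mul hS, add_sub_cancel_left, smul_smul, mul_inv_cancel₀ hμ, one_smul]
  have hSR : S * R = μ • (S - R) := by rw [← (hR.commute hS).eq, hRS]
  rw [Algebra.algebraMap_eq_smul_one]
  -- `(μ - R)⁻¹ = μ⁻¹ + μ⁻² S`, the resolvent of `R` read off from that of `H` at `z + μ⁻¹`
  refine ⟨⟨_, μ⁻¹ • (1 + μ⁻¹ • S), ?_, ?_⟩, rfl⟩ <;>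
  · simp only [mul_add, add_mul, sub_mul, mul_sub, mul_smul_comm, smul_mul_assoc, mul_one,
      one_mul, hRS, hSR]
    match_scalars <;> field_simp <;> ring

lemma norm_le_of_mem_spectrum (hR : IsResolventAt H z R)
    (hd : 0 < Metric.infDist z (specSet H)) {μ : ℂ} (hμ : μ ∈ spectrum ℂ R) :
    ‖μ‖ ≤ (Metric.infDist z (specSet H))⁻¹ := by
  by_contra! hlt
  have hμ0 : μ ≠ 0 := norm_pos_iff.mp ((inv_pos.mpr hd).trans hlt)
  have hnear : dist (z + μ⁻¹) z < Metric.infDist z (specSet H) := by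
    simpa [dist_eq_norm] using inv_lt_of_inv_lt₀ hd hlt
  have hnotMem : z + μ⁻¹ ∉ specSet H := fun hmem =>
    (Metric.infDist_le_dist_of_mem hmem).not_gt (by rwa [dist_comm])
  obtain ⟨S, hS⟩ := notMem_specSet_iff.mp hnotMem
  exact spectrum.mem_iff.mp hμ (hR.isUnit_algebraMap_sub hS hμ0)

end

open scoped InnerProductSpace in
lemma adjoint_eq (hsymm : H.IsFormalAdjoint H) (hR : IsResolventAt H z R)
    (hS : IsResolventAt H (starRingEnd ℂ z) S) : ContinuousLinearMap.adjoint R = S := by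
  ext x
  refine ext_inner_right ℂ fun y => ?_
  rw [ContinuousLinearMap.adjoint_inner_left]
  obtain ⟨hu, hx⟩ := hS.1 x
  obtain ⟨hv, hy⟩ := hR.1 y
  set u : H.domain := ⟨S x, hu⟩
  set v : H.domain := ⟨R y, hv⟩
  calc ⟪x, R y⟫_ℂ = ⟪H u - starRingEnd ℂ z • (u : E), v⟫_ℂ := by rw [← hx]
    _ = ⟪(u : E), H v - z • (v : E)⟫_ℂ := by
      rw [inner_sub_left, inner_smul_left, Complex.conj_conj, hsymm u v, inner_sub_right,
        inner_smul_right]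
    _ = ⟪S x, y⟫_ℂ := by rw [hy]

lemma isStarNormal (hsymm : H.IsFormalAdjoint H) (hR : IsResolventAt H z R)
    (hS : IsResolventAt H (starRingEnd ℂ z) S) : IsStarNormal R :=
  ⟨by rw [ContinuousLinearMap.star_eq_adjoint, hR.adjoint_eq hsymm hS]; exact hS.commute hR⟩

lemma norm_le_of_isSelfAdjoint_conjPMap {Ω : E ≃L[ℂ] E} (hSA : IsSelfAdjoint (conjPMap Ω H))
    (hR : IsResolventAt H z R) (hS : IsResolventAt H (starRingEnd ℂ z) S)
    (hd : 0 < Metric.infDist z (specSet H)) :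
    ‖R‖ ≤ ‖(Ω.symm : E →L[ℂ] E)‖ * ‖(Ω : E →L[ℂ] E)‖ * (Metric.infDist z (specSet H))⁻¹ := by
  set A := (Ω : E →L[ℂ] E) ∘L R ∘L (Ω.symm : E →L[ℂ] E)
  have : IsStarNormal A := (hR.conj Ω).isStarNormal hSA.isFormalAdjoint_self (hS.conj Ω)
  have hspec : spectrum ℂ A = spectrum ℂ R := spectrum.units_conjugate (u := Ω.toUnit)
  have hA : ‖A‖ ≤ (Metric.infDist z (specSet H))⁻¹ :=
    IsStarNormal.norm_le_of_forall_mem_spectrum (inv_nonneg.mpr hd.le) fun μ hμ =>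
      hR.norm_le_of_mem_spectrum hd (hspec ▸ hμ)
  have hRA : R = (Ω.symm : E →L[ℂ] E) ∘L A ∘L (Ω : E →L[ℂ] E) := by
    ext x
    simp [A]
  calc ‖R‖ ≤ ‖(Ω.symm : E →L[ℂ] E)‖ * (‖A‖ * ‖(Ω : E →L[ℂ] E)‖) := by
        rw [hRA]
        exact (ContinuousLinearMap.opNorm_comp_le _ _).trans
          (mul_le_mul_of_nonneg_left (ContinuousLinearMap.opNorm_comp_le _ _) (norm_nonneg _))
    _ = ‖(Ω.symm : E →L[ℂ] E)‖ * ‖(Ω : E →L[ℂ] E)‖ * ‖A‖ := by ring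
    _ ≤ _ := by gcongr

end IsResolventAt

theorem not_similar_to_selfAdjoint_of_wild_pseudospectrum_general (H : E →ₗ.[ℂ] E)
    (hreal : ∀ z ∈ specSet H, z.im = 0)
    (hwild : ∃ ε₀ > (0 : ℝ), ∀ ε ∈ Set.Ioo (0 : ℝ) ε₀, ∀ κ ≥ (1 : ℝ), ∀ M > (0 : ℝ),
      ∃ z ∈ pseudospectrum ε H, M < ‖z‖ ∧ ε * κ < Metric.infDist z (specSet H)) :
    ¬ ∃ Ω : E ≃L[ℂ] E, IsSelfAdjoint (conjPMap Ω H) := by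
  rintro ⟨Ω, hSA⟩
  obtain ⟨ε₀, hε₀, hwild⟩ := hwild
  set κ := max (‖(Ω.symm : E →L[ℂ] E)‖ * ‖(Ω : E →L[ℂ] E)‖) 1
  have hκ : 0 < κ := one_pos.trans_le (le_max_right _ _)
  have hε : 0 < ε₀ / 2 := half_pos hε₀
  obtain ⟨z, hz, -, hfar⟩ := hwild (ε₀ / 2) ⟨hε, half_lt_self hε₀⟩ κ (le_max_right _ _) 1 one_pos
  set d := Metric.infDist z (specSet H)
  have hd : 0 < d := (by positivity : 0 < ε₀ / 2 * κ).trans hfar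
  have hzσ : z ∉ specSet H := fun hmem => hd.ne' (Metric.infDist_zero_of_mem hmem)
  have hzσ' : starRingEnd ℂ z ∉ specSet H := fun hmem => by
    rw [Complex.conj_eq_iff_im.mpr (by simpa using hreal _ hmem)] at hmem
    exact hzσ hmem
  obtain ⟨R, hR, hRε⟩ := hz.resolve_left hzσ
  obtain ⟨S, hS⟩ := notMem_specSet_iff.mp hzσ'
  have hRd := hR.norm_le_of_isSelfAdjoint_conjPMap hSA hS hd
  refine lt_irrefl (ε₀ / 2)⁻¹ ?_
  calc (ε₀ / 2)⁻¹ < ‖R‖ := hRε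
    _ ≤ κ * d⁻¹ := hRd.trans (by gcongr; exact le_max_left _ _)
    _ < κ * (ε₀ / 2 * κ)⁻¹ := by gcongr
    _ = (ε₀ / 2)⁻¹ := by field_simp [hκ.ne']

/-- A closed densely defined operator with real discrete spectrum whose pseudospectra
contain points arbitrarily far away is not similar to any self-adjoint operator via a
bounded and boundedly invertible transformation. -/
theorem not_similar_to_selfAdjoint_of_wild_pseudospectrum (H : E →ₗ.[ℂ] E)
    (hclosed : IsClosed (H.graph : Set (E × E))) (hdense : Dense (H.domain : Set E))
    (hreal : ∀ z ∈ specSet H, z.im = 0)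
    (hdisc : DiscreteTopology (specSet H))
    (hwild : ∃ ε₀ > (0 : ℝ), ∀ ε ∈ Set.Ioo (0 : ℝ) ε₀, ∀ κ ≥ (1 : ℝ), ∀ M > (0 : ℝ),
      ∃ z ∈ pseudospectrum ε H, M < ‖z‖ ∧ ε * κ < Metric.infDist z (specSet H)) :
    ¬ ∃ Ω : E ≃L[ℂ] E, IsSelfAdjoint (conjPMap Ω H) :=
  not_similar_to_selfAdjoint_of_wild_pseudospectrum_general H hreal hwild
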